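/- arXiv:2401.12110 — 4 statements merged into one kernel-verified Lean document; each statement's English description precedes it below -/
import Mathlib

section
/- For every complex number ξ, the series S(ξ) = ∑_{s=1}^∞ (ξ^s/s!) · H_s converges and equals e^ξ · Ein(ξ), where H_s = ∑_{k=1}^s 1/k is the s-th harmonic number. (This is identity (2.32) in the proof of Theorem 2.1.) -/
/-!
Multiply the series of `exp ξ` and `Ein ξ` (both absolutely convergent) as a Cauchy product.
The coefficient of `ξ^(n+1)` is `∑_{j ≤ n} (-1)^j / ((n-j)! (j+1) (j+1)!)`, which is
`(n+1)!⁻¹ ∑_{j ≤ n} (-1)^j C(n+1, j+1) / (j+1)`, and the classical identity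
`∑_{j=1}^m (-1)^(j+1) C(m, j) / j = H_m` follows by induction on `m` from Pascal's rule and
`∑_{j=0}^m (-1)^j C(m, j) / (j+1) = 1 / (m+1)`.
-/

open scoped BigOperators

/-- The entire exponential integral `Ein(z) = ∑_{k=1}^∞ (−1)^{k+1} z^k/(k·k!)`. -/
noncomputable def Ein (z : ℂ) : ℂ :=
  ∑' k : ℕ, (-1) ^ k * z ^ (k + 1) / ((k + 1 : ℂ) * (Nat.factorial (k + 1) : ℂ))

open Finset
open scoped Nat

theorem sum_range_neg_one_pow_mul_choose_succ {R : Type*} [Ring R] (m : ℕ) :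
    ∑ j ∈ range (m + 1), (-1 : R) ^ j * ((m + 1).choose (j + 1) : R) = 1 := by
  have h := Int.alternating_sum_range_choose_of_ne (n := m + 1) m.succ_ne_zero
  rw [sum_range_succ'] at h
  simp only [pow_succ, Nat.choose_zero_right, pow_zero, Nat.cast_one, mul_one, mul_neg_one,
    neg_mul, sum_neg_distrib] at h
  have h' := congrArg (Int.cast : ℤ → R) (neg_add_eq_zero.mp h)
  push_cast at h'
  exact h'

section BinomialHarmonic

variable {K : Type*} [Field K] [CharZero K]

theorem sum_range_neg_one_pow_mul_choose_div_succ (m : ℕ) :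
    ∑ j ∈ range (m + 1), (-1 : K) ^ j * (m.choose j : K) / ((j : K) + 1)
      = 1 / ((m : K) + 1) := by
  have hterm (j : ℕ) : (-1 : K) ^ j * (m.choose j : K) / ((j : K) + 1)
      = (-1 : K) ^ j * ((m + 1).choose (j + 1) : K) / ((m : K) + 1) := by
    have h : ((m : K) + 1) * m.choose j = (m + 1).choose (j + 1) * ((j : K) + 1) := by
      exact_mod_cast Nat.add_one_mul_choose_eq m j
    rw [div_eq_div_iff (Nat.cast_add_one_ne_zero j) (Nat.cast_add_one_ne_zero m)]
    linear_combination (-1 : K) ^ j * h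
  rw [sum_congr rfl fun j _ => hterm j, ← sum_div, sum_range_neg_one_pow_mul_choose_succ]

theorem sum_range_neg_one_pow_mul_choose_succ_div_succ (n : ℕ) :
    ∑ j ∈ range (n + 1), (-1 : K) ^ j * ((n + 1).choose (j + 1) : K) / ((j : K) + 1)
      = ∑ j ∈ range (n + 1), 1 / ((j : K) + 1) := by
  induction n with
  | zero => norm_num
  | succ n ih =>
    have pascal :
        ∑ j ∈ range (n + 2), (-1 : K) ^ j * ((n + 2).choose (j + 1) : K) / ((j : K) + 1)
          = ∑ j ∈ range (n + 2), (-1 : K) ^ j * ((n + 1).choose j : K) / ((j : K) + 1)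
            + ∑ j ∈ range (n + 2),
                (-1 : K) ^ j * ((n + 1).choose (j + 1) : K) / ((j : K) + 1) := by
      rw [← sum_add_distrib]
      refine sum_congr rfl fun j _ => ?_
      rw [Nat.choose_succ_succ', Nat.cast_add]
      ring
    rw [pascal, sum_range_neg_one_pow_mul_choose_div_succ, sum_range_succ _ (n + 1),
      Nat.choose_succ_self, Nat.cast_zero, mul_zero, zero_div, add_zero, ih,
      sum_range_succ _ (n + 1)]
    push_cast
    ring

theorem sum_antidiagonal_neg_one_pow_div_factorial_mul_factorial (n : ℕ) :
    ∑ kl ∈ antidiagonal n,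
        (-1 : K) ^ kl.2 / ((kl.1 ! : K) * (((kl.2 : K) + 1) * ((kl.2 + 1)! : K)))
      = (∑ j ∈ range (n + 1), 1 / ((j : K) + 1)) / ((n + 1)! : K) := by
  rw [← Nat.sum_antidiagonal_swap, Nat.sum_antidiagonal_eq_sum_range_succ_mk,
    ← sum_range_neg_one_pow_mul_choose_succ_div_succ, sum_div]
  refine sum_congr rfl fun j hj => ?_
  have hjn : j + 1 ≤ n + 1 := by simpa [Nat.lt_succ_iff] using hj
  have hfac : ((n + 1)! : K) ≠ 0 := Nat.cast_ne_zero.mpr (Nat.factorial_ne_zero _)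
  rw [Prod.swap_prod_mk, Nat.cast_choose K hjn, Nat.add_sub_add_right]
  field_simp

end BinomialHarmonic

noncomputable def einTerm (z : ℂ) (k : ℕ) : ℂ :=
  (-1) ^ k * z ^ (k + 1) / (((k : ℂ) + 1) * ((k + 1)! : ℂ))

theorem norm_einTerm_le (z : ℂ) (k : ℕ) :
    ‖einTerm z k‖ ≤ ‖z ^ (k + 1) / ((k + 1)! : ℂ)‖ := by
  rw [einTerm, norm_div, norm_mul, norm_mul, norm_pow, norm_neg, norm_one, one_pow, one_mul,
    norm_div]
  have hk : 1 ≤ ‖(k : ℂ) + 1‖ := by norm_cast; simp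
  have hfac : 0 < ‖((k + 1)! : ℂ)‖ :=
    norm_pos_iff.mpr (Nat.cast_ne_zero.mpr k.succ.factorial_ne_zero)
  exact div_le_div_of_nonneg_left (norm_nonneg _) hfac (le_mul_of_one_le_left hfac.le hk)

theorem summable_norm_einTerm (z : ℂ) : Summable fun k => ‖einTerm z k‖ :=
  ((summable_nat_add_iff 1).2 (NormedSpace.norm_expSeries_div_summable z)).of_nonneg_of_le
    (fun _ => norm_nonneg _) (norm_einTerm_le z)

theorem hasSum_einTerm (z : ℂ) : HasSum (einTerm z) (Ein z) :=
  (summable_norm_einTerm z).of_norm.hasSum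

theorem sum_antidiagonal_exp_term_mul_einTerm (z : ℂ) (n : ℕ) :
    ∑ kl ∈ antidiagonal n, z ^ kl.1 / (kl.1 ! : ℂ) * einTerm z kl.2
      = z ^ (n + 1) / ((n + 1)! : ℂ) * ∑ j ∈ range (n + 1), 1 / ((j : ℂ) + 1) := by
  have hterm : ∀ kl ∈ antidiagonal n, z ^ kl.1 / (kl.1 ! : ℂ) * einTerm z kl.2
      = z ^ (n + 1) *
          ((-1 : ℂ) ^ kl.2 / ((kl.1 ! : ℂ) * (((kl.2 : ℂ) + 1) * ((kl.2 + 1)! : ℂ)))) := by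
    rintro ⟨k, l⟩ hkl
    obtain rfl : k + l = n := HasAntidiagonal.mem_antidiagonal.mp hkl
    rw [einTerm]
    field_simp
    ring
  rw [sum_congr rfl hterm, ← mul_sum, sum_antidiagonal_neg_one_pow_div_factorial_mul_factorial]
  ring

/-- **Identity (2.32)**: for every complex `ξ`, the series `S(ξ) = ∑_{s=1}^∞ (ξ^s/s!) H_s`
(`H_s` the `s`-th harmonic number) converges and equals `e^ξ · Ein(ξ)`. -/
theorem harmonic_exp_series_eq_exp_mul_Ein (ξ : ℂ) :
    HasSum
      (fun s : ℕ =>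
        ξ ^ (s + 1) / (Nat.factorial (s + 1) : ℂ) *
          ∑ k ∈ Finset.range (s + 1), (1 : ℂ) / ((k : ℂ) + 1))
      (Complex.exp ξ * Ein ξ) := by
  have hexp := NormedSpace.norm_expSeries_div_summable ξ
  have hEin := summable_norm_einTerm ξ
  have hprod := (summable_norm_sum_mul_antidiagonal_of_summable_norm hexp hEin).of_norm.hasSum
  rw [← tsum_mul_tsum_eq_tsum_sum_antidiagonal_of_summable_norm hexp hEin,
    (NormedSpace.expSeries_div_hasSum_exp ξ).tsum_eq, (hasSum_einTerm ξ).tsum_eq,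
    ← Complex.exp_eq_exp_ℂ] at hprod
  simpa only [sum_antidiagonal_exp_term_mul_einTerm] using hprod
end

section
/- For every real x > 0, −∑_{k=1}^∞ ψ(2k) x^k / Γ(2k) = √x · [ sinh(√x)·(Chi(√x) − ln √x) − cosh(√x)·Shi(√x) ]. (This is the value (2.9) of the derivative of the integral Mittag-Leffler function with respect to α at α = 2, β = 0.) -/
open scoped BigOperators

/-- The digamma function `ψ(x) = Γ'(x)/Γ(x)`. -/
noncomputable def digamma (x : ℝ) : ℝ := deriv Real.Gamma x / Real.Gamma x

/-- The hyperbolic sine integral `Shi(y) = ∫₀^y sinh t / t dt`. -/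
noncomputable def Shi (y : ℝ) : ℝ := ∫ t in (0 : ℝ)..y, Real.sinh t / t

/-- The hyperbolic cosine integral `Chi(y) = γ + ln y − ∫₀^y (1 − cosh t)/t dt`. -/
noncomputable def Chi (y : ℝ) : ℝ :=
  Real.eulerMascheroniConstant + Real.log y - ∫ t in (0 : ℝ)..y, (1 - Real.cosh t) / t

/-!
Write `y = √x`. Since `ψ(n + 1) = -γ + H_n`, the left-hand side is
`y (γ sinh y - ∑ₖ H_{2k+1} y^{2k+1} / (2k+1)!)`, so everything rests on the odd part of the
exponential generating function of the harmonic numbers. A Cauchy product with the exponential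
series and the identity `∑_{k=1}^n (-1)^{k+1} C(n,k) / k = H_n` give
`∑ₙ Hₙ yⁿ / n! = e^y Ein y` with `Ein y = ∑_{n≥1} (-1)^{n+1} yⁿ / (n n!)`. Integrating the series
of `sinh t / t` and `(cosh t - 1) / t` termwise identifies the odd part of `Ein` with `Shi` and its
even part with `∫₀^y (1 - cosh t) / t dt = γ + ln y - Chi y`; the odd part of `e^y Ein y` is then
`cosh y Shi y + sinh y ∫₀^y (1 - cosh t) / t dt`.
-/

open Finset Nat MeasureTheory

lemma sum_range_alternating_choose_div_succ (n : ℕ) :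
    ∑ k ∈ range (n + 1), (-1 : ℝ) ^ k * n.choose k / (k + 1) = 1 / (n + 1) := by
  have alternating : ∑ k ∈ range (n + 1), (-1 : ℝ) ^ k * (n + 1).choose (k + 1) = 1 := by
    have h : ((∑ k ∈ range (n + 2), (-1 : ℤ) ^ k * (n + 1).choose k : ℤ) : ℝ) = 0 := by
      exact_mod_cast Int.alternating_sum_range_choose_of_ne n.succ_ne_zero
    push_cast [sum_range_succ' _ (n + 1), pow_succ] at h
    simpa [sum_neg_distrib, add_eq_zero_iff_eq_neg] using h
  calc ∑ k ∈ range (n + 1), (-1 : ℝ) ^ k * n.choose k / (k + 1)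
      = (∑ k ∈ range (n + 1), (-1 : ℝ) ^ k * (n + 1).choose (k + 1)) / (n + 1) := by
        rw [sum_div]
        refine sum_congr rfl fun k _ => ?_
        have h : ((n + 1 : ℕ) : ℝ) * n.choose k = (n + 1).choose (k + 1) * (k + 1) := by
          exact_mod_cast Nat.add_one_mul_choose_eq n k
        push_cast at h
        rw [mul_div_assoc, mul_div_assoc]
        congr 1
        rw [div_eq_div_iff (by positivity) (by positivity)]
        linear_combination h
    _ = 1 / (n + 1) := by rw [alternating]

lemma sum_range_alternating_choose_succ_div (n : ℕ) :
    ∑ k ∈ range n, (-1 : ℝ) ^ k * n.choose (k + 1) / (k + 1) = harmonic n := by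
  induction n with
  | zero => simp
  | succ n ih =>
    calc ∑ k ∈ range (n + 1), (-1 : ℝ) ^ k * (n + 1).choose (k + 1) / (k + 1)
        = ∑ k ∈ range (n + 1), (-1 : ℝ) ^ k * n.choose k / (k + 1)
          + ∑ k ∈ range (n + 1), (-1 : ℝ) ^ k * n.choose (k + 1) / (k + 1) := by
          rw [← sum_add_distrib]
          refine sum_congr rfl fun k _ => ?_
          rw [Nat.choose_succ_succ]
          push_cast
          ring
      _ = harmonic (n + 1) := by
          rw [sum_range_alternating_choose_div_succ, sum_range_succ _ n, ih,
            Nat.choose_succ_self, harmonic_succ]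
          push_cast
          ring

/-- Taylor coefficients of `Ein y = ∫₀^y (1 - e^{-t}) / t dt`;
`einCoeff 0 = 0` since `x / 0 = 0`. -/
noncomputable def einCoeff (n : ℕ) : ℝ := (-1) ^ (n + 1) / (n * n !)

lemma sum_range_einCoeff_div_factorial (n : ℕ) :
    ∑ k ∈ range (n + 1), einCoeff k / (n - k) ! = harmonic n / n ! := by
  rw [sum_range_succ', ← sum_range_alternating_choose_succ_div, sum_div]
  simp only [einCoeff, CharP.cast_eq_zero, zero_mul, div_zero, zero_div, add_zero]
  refine sum_congr rfl fun k hk => ?_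
  have hkn : k + 1 ≤ n := mem_range.mp hk
  rw [Nat.cast_choose ℝ hkn]
  push_cast
  field_simp
  ring

lemma summable_norm_einCoeff_mul_pow (y : ℝ) : Summable fun n => ‖einCoeff n * y ^ n‖ := by
  refine (Real.summable_pow_div_factorial |y|).of_nonneg_of_le (fun _ => norm_nonneg _) fun n => ?_
  have hcoeff : |einCoeff n| ≤ 1 / n ! := by
    rcases n.eq_zero_or_pos with rfl | hn
    · simp [einCoeff]
    · rw [einCoeff, abs_div, abs_pow, abs_neg, abs_one, one_pow, abs_of_pos (by positivity)]
      gcongr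
      exact_mod_cast Nat.le_mul_of_pos_left n ! hn
  rw [norm_mul, norm_pow, Real.norm_eq_abs, Real.norm_eq_abs, div_eq_mul_one_div, mul_comm]
  gcongr

lemma hasSum_harmonic_div_factorial_mul_pow {y E : ℝ}
    (hE : HasSum (fun n => einCoeff n * y ^ n) E) :
    HasSum (fun n => harmonic n / n ! * y ^ n) (E * Real.exp y) := by
  have hexp : HasSum (fun n => y ^ n / n !) (Real.exp y) := by
    rw [Real.exp_eq_exp_ℝ]
    exact NormedSpace.expSeries_div_hasSum_exp y
  have hexp_norm : Summable fun n => ‖y ^ n / (n ! : ℝ)‖ :=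
    (Real.summable_pow_div_factorial |y|).congr fun n => by simp
  have h := hasSum_sum_range_mul_of_summable_norm (summable_norm_einCoeff_mul_pow y) hexp_norm
  rw [hE.tsum_eq, hexp.tsum_eq] at h
  refine h.congr_fun fun n => ?_
  rw [← sum_range_einCoeff_div_factorial, sum_mul]
  refine sum_congr rfl fun k hk => ?_
  rw [← pow_mul_pow_sub y (mem_range_succ_iff.mp hk)]
  ring

lemma hasSum_mul_neg_pow {c : ℕ → ℝ} {y A B : ℝ}
    (heven : HasSum (fun m => c (2 * m) * y ^ (2 * m)) A)
    (hodd : HasSum (fun m => c (2 * m + 1) * y ^ (2 * m + 1)) B) :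
    HasSum (fun n => c n * (-y) ^ n) (A - B) := by
  rw [sub_eq_add_neg]
  refine HasSum.even_add_odd ?_ ?_
  · simpa [(even_two_mul _).neg_pow] using heven
  · simpa [(odd_two_mul_add_one _).neg_pow] using hodd.neg

lemma hasSum_odd_mul_pow {c : ℕ → ℝ} {y s t : ℝ} (hs : HasSum (fun n => c n * y ^ n) s)
    (ht : HasSum (fun n => c n * (-y) ^ n) t) :
    HasSum (fun m => c (2 * m + 1) * y ^ (2 * m + 1)) ((s - t) / 2) := by
  have hinj : Function.Injective fun m : ℕ => 2 * m + 1 := fun a b h => by simpa using h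
  have h := (hs.sub ht).div_const 2
  rw [← hinj.hasSum_iff] at h
  · refine h.congr_fun fun m => ?_
    simp only [Function.comp_apply, (odd_two_mul_add_one m).neg_pow]
    ring
  · intro n hn
    have heven : Even n := Nat.not_odd_iff_even.mp fun ⟨m, hm⟩ => hn ⟨m, hm.symm⟩
    simp [heven.neg_pow]

lemma hasSum_intervalIntegral_mul_pow {c : ℕ → ℝ} {p : ℕ → ℕ} {f : ℝ → ℝ} {y : ℝ} (hy : 0 < y)
    (hc : ∀ n, 0 ≤ c n) (hf : ∀ t, 0 < t → HasSum (fun n => c n * t ^ p n) (f t)) :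
    HasSum (fun n => c n * y ^ (p n + 1) / (p n + 1)) (∫ t in 0..y, f t) := by
  have hterm : ∀ n, ∫ t in Set.Ioc 0 y, c n * t ^ p n = c n * y ^ (p n + 1) / (p n + 1) := by
    intro n
    rw [← intervalIntegral.integral_of_le hy.le, intervalIntegral.integral_const_mul,
      integral_pow]
    simp [mul_div_assoc]
  have hnorm : ∀ n, ∫ t in Set.Ioc 0 y, ‖c n * t ^ p n‖ = c n * y ^ (p n + 1) / (p n + 1) := by
    intro n
    rw [← hterm n]
    refine setIntegral_congr_fun measurableSet_Ioc fun t ht => ?_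
    exact Real.norm_of_nonneg (mul_nonneg (hc n) (pow_nonneg ht.1.le _))
  have hsummable : Summable fun n => c n * y ^ (p n + 1) / (p n + 1) := by
    have hnonneg : ∀ n, 0 ≤ c n * y ^ (p n + 1) := fun n => mul_nonneg (hc n) (by positivity)
    refine ((hf y hy).summable.mul_left y).of_nonneg_of_le
      (fun n => div_nonneg (hnonneg n) (by positivity)) fun n => ?_
    calc c n * y ^ (p n + 1) / (p n + 1) ≤ c n * y ^ (p n + 1) :=
          div_le_self (hnonneg n) (by simp)
      _ = y * (c n * y ^ p n) := by ring
  have h := hasSum_integral_of_summable_integral_norm (F := fun n t => c n * t ^ p n)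
    (fun n => (continuous_const.mul (continuous_pow (p n))).integrableOn_Ioc)
    (hsummable.congr fun n => (hnorm n).symm)
  rw [intervalIntegral.integral_of_le hy.le,
    setIntegral_congr_fun measurableSet_Ioc fun t ht => (hf t ht.1).tsum_eq.symm]
  simpa only [hterm] using h

lemma hasSum_einCoeff_odd_mul_pow {y : ℝ} (hy : 0 < y) :
    HasSum (fun m => einCoeff (2 * m + 1) * y ^ (2 * m + 1)) (Shi y) := by
  have h := hasSum_intervalIntegral_mul_pow (c := fun m => 1 / (2 * m + 1 : ℕ) !)
    (p := fun m => 2 * m)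
    (f := fun t => Real.sinh t / t) hy (fun m => by positivity) fun t ht =>
      ((Real.hasSum_sinh t).div_const t).congr_fun fun m => by
        rw [pow_succ]
        field_simp
  refine h.congr_fun fun m => ?_
  simp only [einCoeff, pow_succ, pow_mul]
  push_cast
  field_simp
  ring

lemma hasSum_einCoeff_even_mul_pow {y : ℝ} (hy : 0 < y) :
    HasSum (fun m => einCoeff (2 * m) * y ^ (2 * m))
      (∫ t in (0 : ℝ)..y, (1 - Real.cosh t) / t) := by
  have hcosh (t : ℝ) : HasSum (fun m => t ^ (2 * (m + 1)) / (2 * (m + 1)) !) (Real.cosh t - 1) := by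
    simpa using (hasSum_nat_add_iff' 1).mpr (Real.hasSum_cosh t)
  have h := hasSum_intervalIntegral_mul_pow (c := fun m => 1 / (2 * m + 2 : ℕ) !)
    (p := fun m => 2 * m + 1)
    (f := fun t => (Real.cosh t - 1) / t) hy (fun m => by positivity) fun t ht =>
      ((hcosh t).div_const t).congr_fun fun m => by
        rw [show 2 * (m + 1) = 2 * m + 1 + 1 by ring, pow_succ]
        field_simp
        ring
  have hshift := (hasSum_nat_add_iff (f := fun m => einCoeff (2 * m) * y ^ (2 * m)) 1).mp
    (h.neg.congr_fun fun m => ?_)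
  · have hneg : ∫ t in (0 : ℝ)..y, (1 - Real.cosh t) / t
        = -∫ t in (0 : ℝ)..y, (Real.cosh t - 1) / t := by
      rw [← intervalIntegral.integral_neg]
      congr 1 with t
      ring
    simpa [hneg, einCoeff] using hshift
  · simp only [einCoeff, pow_succ, pow_mul, mul_add, mul_one]
    push_cast
    field_simp
    ring

lemma hasSum_harmonic_odd_div_factorial_mul_pow {y : ℝ} (hy : 0 < y) :
    HasSum (fun m => harmonic (2 * m + 1) / (2 * m + 1) ! * y ^ (2 * m + 1))
      (Real.cosh y * Shi y + Real.sinh y * ∫ t in (0 : ℝ)..y, (1 - Real.cosh t) / t) := by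
  have heven := hasSum_einCoeff_even_mul_pow hy
  have hodd := hasSum_einCoeff_odd_mul_pow hy
  convert hasSum_odd_mul_pow (hasSum_harmonic_div_factorial_mul_pow (heven.even_add_odd hodd))
    (hasSum_harmonic_div_factorial_mul_pow (hasSum_mul_neg_pow heven hodd)) using 1
  rw [Real.cosh_eq, Real.sinh_eq]
  ring

lemma digamma_nat_add_one (n : ℕ) :
    digamma (n + 1) = -Real.eulerMascheroniConstant + harmonic n := by
  rw [digamma, Real.deriv_Gamma_nat, Real.Gamma_nat_eq_factorial,
    mul_div_cancel_left₀ _ (by positivity)]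

/-- **Value (2.11)... (2.9)**: for every real `x > 0`,
`−∑_{k=1}^∞ ψ(2k) x^k / Γ(2k) = √x [sinh √x (Chi √x − ln √x) − cosh √x · Shi √x]`. -/
theorem integral_mittagLeffler_alpha_deriv_two_zero (x : ℝ) (hx : 0 < x) :
    -∑' k : ℕ, digamma (2 * ((k : ℝ) + 1)) * x ^ (k + 1) / Real.Gamma (2 * ((k : ℝ) + 1)) =
      Real.sqrt x *
        (Real.sinh (Real.sqrt x) * (Chi (Real.sqrt x) - Real.log (Real.sqrt x)) -
          Real.cosh (Real.sqrt x) * Shi (Real.sqrt x)) := by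
  set y := Real.sqrt x
  set γ := Real.eulerMascheroniConstant
  have hy : 0 < y := Real.sqrt_pos.mpr hx
  have hseries := ((Real.hasSum_sinh y).mul_left (-γ)).add
    (hasSum_harmonic_odd_div_factorial_mul_pow hy) |>.mul_left y
  have hterm : ∀ k : ℕ, digamma (2 * ((k : ℝ) + 1)) * x ^ (k + 1) / Real.Gamma (2 * ((k : ℝ) + 1))
      = y * (-γ * (y ^ (2 * k + 1) / (2 * k + 1) !) +
          harmonic (2 * k + 1) / (2 * k + 1) ! * y ^ (2 * k + 1)) := by
    intro k
    have harg : 2 * ((k : ℝ) + 1) = ((2 * k + 1 : ℕ) : ℝ) + 1 := by push_cast; ring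
    rw [harg, digamma_nat_add_one, Real.Gamma_nat_eq_factorial, ← Real.sq_sqrt hx.le, ← pow_mul]
    ring
  rw [funext hterm, hseries.tsum_eq, Chi]
  ring
end

section
/- Let q ≥ 1 be an integer, let x ≠ 0 be real, and let β be a real number such that β − h/q is not a nonpositive integer for any h ∈ {0, 1, …, q−1}. Then −∑_{k=1}^∞ ψ(k/q + β) x^k / Γ(k/q + β) = −∑_{h=0}^{q−1} (x^{−h} / Γ(β − h/q)) · Q(β − h/q, x^q), where Q(a, y) = ∑_{k=1}^∞ y^k ψ(k + a) / (a)_k. (This is Theorem 2.4, the reduction formula for the derivative of the integral Mittag-Leffler function with respect to α at α = 1/q.) -/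
open scoped BigOperators

/-- `Q(a, y) = ∑_{k=1}^∞ y^k ψ(k + a) / (a)_k`, with `(a)_k` the Pochhammer symbol. -/
noncomputable def Q (a y : ℝ) : ℝ :=
  ∑' k : ℕ, y ^ (k + 1) * digamma (((k : ℝ) + 1) + a) / (ascPochhammer ℝ (k + 1)).eval a




lemma hasDerivAt_logGamma {t : ℝ} (ht : 0 < t) :
    HasDerivAt (Real.log ∘ Real.Gamma) (digamma t) t := by
  have h1 : DifferentiableAt ℝ Real.Gamma t :=
    Real.differentiableAt_Gamma fun m =>
      (((neg_nonpos).mpr (Nat.cast_nonneg m)).trans_lt ht).ne'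
  exact h1.hasDerivAt.log (Real.Gamma_pos_of_pos ht).ne'

lemma digamma_le_log {t : ℝ} (ht : 0 < t) : digamma t ≤ Real.log t := by
  have h := Real.convexOn_log_Gamma.le_slope_of_hasDerivAt (Set.mem_Ioi.2 ht)
    (Set.mem_Ioi.2 (by linarith : (0:ℝ) < t + 1)) (lt_add_one t) (hasDerivAt_logGamma ht)
  rw [slope_def_field] at h
  have hΓ : Real.Gamma (t + 1) = t * Real.Gamma t := Real.Gamma_add_one ht.ne'
  have hΓpos := Real.Gamma_pos_of_pos ht
  calc digamma t ≤ _ := h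
    _ = Real.log t := by
        simp only [Function.comp_apply, hΓ, Real.log_mul ht.ne' hΓpos.ne']
        ring

lemma log_le_digamma {t : ℝ} (ht : 1 < t) : Real.log (t - 1) ≤ digamma t := by
  have h0 : (0:ℝ) < t - 1 := by linarith
  have h := Real.convexOn_log_Gamma.slope_le_of_hasDerivAt (Set.mem_Ioi.2 h0)
    (Set.mem_Ioi.2 (by linarith : (0:ℝ) < t)) (by linarith) (hasDerivAt_logGamma (by linarith))
  rw [slope_def_field] at h
  have hΓ : Real.Gamma t = (t - 1) * Real.Gamma (t - 1) := by
    have := Real.Gamma_add_one h0.ne'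
    rw [sub_add_cancel] at this
    exact this
  have hΓpos := Real.Gamma_pos_of_pos h0
  calc Real.log (t - 1)
      = _ := by
        simp only [Function.comp_apply, hΓ, Real.log_mul h0.ne' hΓpos.ne']
        ring
    _ ≤ digamma t := h

lemma poch_ne_zero {a : ℝ} (ha : ∀ n : ℕ, a ≠ -n) (m : ℕ) :
    (ascPochhammer ℝ m).eval a ≠ 0 := by
  induction m with
  | zero => simp
  | succ k ih =>
    rw [ascPochhammer_succ_eval]
    refine mul_ne_zero ih fun h => ha k ?_
    linarith

lemma Gamma_pochhammer {a : ℝ} (ha : ∀ n : ℕ, a ≠ -n) (m : ℕ) :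
    Real.Gamma ((m : ℝ) + a) = (ascPochhammer ℝ m).eval a * Real.Gamma a := by
  induction m with
  | zero => simp
  | succ k ih =>
    have hk : a + (k : ℝ) ≠ 0 := fun h => ha k (by linarith)
    have : ((k : ℝ) + 1 + a) = (a + k) + 1 := by ring
    rw [Nat.cast_succ, this, Real.Gamma_add_one hk, ascPochhammer_succ_eval,
      show a + (k:ℝ) = (k:ℝ) + a by ring, ih]
    ring



lemma summable_Qterm {a : ℝ} (ha : ∀ n : ℕ, a ≠ -n) (y : ℝ) :
    Summable (fun k : ℕ =>
      y ^ (k + 1) * digamma (((k : ℝ) + 1) + a) / (ascPochhammer ℝ (k + 1)).eval a) := by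
  rcases eq_or_ne y 0 with rfl | hy
  · refine summable_of_ne_finset_zero (s := ∅) fun k _ => by simp
  refine summable_of_ratio_norm_eventually_le (r := 1/2) (by norm_num) ?_
  obtain ⟨N, hN⟩ := exists_nat_ge (max (2 - a) (4 * |y| - a - 1))
  rw [Filter.eventually_atTop]
  refine ⟨N, fun k hk => ?_⟩
  have hk' : (N : ℝ) ≤ (k : ℝ) := Nat.cast_le.2 hk
  set s : ℝ := (k : ℝ) + a with hs
  have hs2 : 2 ≤ s := by
    have := (le_max_left (2 - a) (4 * |y| - a - 1)).trans hN; simp only [hs]; linarith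
  have hy4 : 4 * |y| ≤ s + 1 := by
    have := (le_max_right (2 - a) (4 * |y| - a - 1)).trans hN; simp only [hs]; linarith
  have hlog : 0 < Real.log s := Real.log_pos (by linarith)
  have h1 : Real.log s ≤ digamma (s + 1) := by
    have := log_le_digamma (t := s + 1) (by linarith)
    simpa using this
  have h2 : digamma (s + 2) ≤ Real.log (s + 2) := digamma_le_log (by linarith)
  have h2' : 0 ≤ digamma (s + 2) := by
    have h := log_le_digamma (t := s + 2) (by linarith)
    have h' : Real.log (s + 1) ≤ digamma (s + 2) := by
      have e : s + 2 - 1 = s + 1 := by ring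
      rwa [e] at h
    have := Real.log_pos (show (1:ℝ) < s + 1 by linarith)
    linarith
  have hlogsq : Real.log (s ^ 2) = 2 * Real.log s := by
    rw [Real.log_pow]; norm_num
  have hlog2 : Real.log (s + 2) ≤ 2 * Real.log s := by
    rw [← hlogsq]
    exact Real.log_le_log (by linarith) (by nlinarith)
  have key : |y| * digamma (s + 2) ≤ 1 / 2 * ((s + 1) * digamma (s + 1)) := by
    have c1 : |y| * digamma (s + 2) ≤ |y| * (2 * Real.log s) :=
      mul_le_mul_of_nonneg_left (h2.trans hlog2) (abs_nonneg y)
    have c2 : |y| * (2 * Real.log s) ≤ 1 / 2 * ((s + 1) * Real.log s) := by nlinarith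
    have c3 : 1 / 2 * ((s + 1) * Real.log s) ≤ 1 / 2 * ((s + 1) * digamma (s + 1)) := by
      nlinarith
    linarith
  -- assemble
  have hPk : (0:ℝ) < |(ascPochhammer ℝ (k + 1)).eval a| := abs_pos.2 (poch_ne_zero ha _)
  have hPsucc : (ascPochhammer ℝ (k + 1 + 1)).eval a
      = (ascPochhammer ℝ (k + 1)).eval a * (s + 1) := by
    rw [ascPochhammer_succ_eval]; push_cast [hs]; ring
  have harg1 : ((k:ℝ) + 1) + a = s + 1 := by rw [hs]; ring
  have harg2 : (((k:ℕ) + 1 : ℕ) : ℝ) + 1 + a = s + 2 := by push_cast [hs]; ring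
  rw [hPsucc, harg2, Real.norm_eq_abs, Real.norm_eq_abs, harg1]
  rw [abs_div, abs_div, abs_mul, abs_mul, abs_mul, abs_pow, abs_pow]
  have hψ1 : 0 < digamma (s + 1) := lt_of_lt_of_le hlog h1
  rw [abs_of_nonneg h2', abs_of_pos hψ1, abs_of_pos (show (0:ℝ) < s + 1 by linarith)]
  have hA : (0:ℝ) < |y| ^ (k + 1) := pow_pos (abs_pos.2 hy) _
  rw [← mul_div_assoc, div_le_div_iff₀ (by positivity) (by positivity)]
  have := mul_le_mul_of_nonneg_left key (mul_pos hA hPk).le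
  rw [pow_succ]
  ring_nf at this ⊢
  linarith [this]



/-- The reindexing equivalence `(h, m) ↦ q m + (q - 1 - h)`, i.e. `n + 1 = q (m + 1) - h`. -/
def mlEquiv (q : ℕ) (hq : 1 ≤ q) : Fin q × ℕ ≃ ℕ where
  toFun p := q * p.2 + (q - 1 - (p.1 : ℕ))
  invFun n := (⟨q - 1 - n % q, by omega⟩, n / q)
  left_inv := by
    rintro ⟨⟨h, hh⟩, m⟩
    have hr : q - 1 - h < q := by omega
    have h1 : (q * m + (q - 1 - h)) % q = q - 1 - h := by
      rw [Nat.mul_add_mod]; exact Nat.mod_eq_of_lt hr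
    have h2 : (q * m + (q - 1 - h)) / q = m := by
      rw [Nat.mul_add_div (by omega)]
      simp [Nat.div_eq_of_lt hr]
    simp only [Prod.mk.injEq, Fin.mk.injEq, h1, h2]
    exact ⟨by omega, trivial⟩
  right_inv := by
    intro n
    have h4 : n % q < q := Nat.mod_lt _ (by omega)
    have h5 : q - 1 - (q - 1 - n % q) = n % q := by omega
    simp only [h5]
    exact Nat.div_add_mod n q

set_option maxHeartbeats 1000000 in
/-- **Theorem 2.4**: for an integer `q ≥ 1`, real `x ≠ 0` and real `β` with `β − h/q` never a
nonpositive integer for `h ∈ {0,…,q−1}`,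
`−∑_{k=1}^∞ ψ(k/q + β) x^k / Γ(k/q + β)
  = −∑_{h=0}^{q−1} (x^{−h} / Γ(β − h/q)) Q(β − h/q, x^q)`. -/
theorem integral_mittagLeffler_alpha_deriv_inv_nat (q : ℕ) (hq : 1 ≤ q) (x : ℝ) (hx : x ≠ 0)
    (β : ℝ) (hβ : ∀ h : ℕ, h < q → ∀ n : ℕ, β - (h : ℝ) / q ≠ -(n : ℝ)) :
    -∑' k : ℕ,
        digamma (((k : ℝ) + 1) / q + β) * x ^ (k + 1) /
          Real.Gamma (((k : ℝ) + 1) / q + β) =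
      -∑ h ∈ Finset.range q,
        x ^ (-(h : ℤ)) / Real.Gamma (β - (h : ℝ) / q) * Q (β - (h : ℝ) / q) (x ^ q) := by
  have hq0 : (q : ℝ) ≠ 0 := Nat.cast_ne_zero.2 (by omega)
  set y : ℝ := x ^ q with hy
  set a : ℕ → ℝ := fun h => β - (h : ℝ) / q with ha_def
  set f : ℕ → ℝ := fun k => digamma (((k : ℝ) + 1) / q + β) * x ^ (k + 1) /
          Real.Gamma (((k : ℝ) + 1) / q + β) with hf
  set F : Fin q × ℕ → ℝ := fun p =>
    x ^ (-((p.1 : ℕ) : ℤ)) / Real.Gamma (a p.1) *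
      (y ^ (p.2 + 1) * digamma (((p.2 : ℝ) + 1) + a p.1) /
        (ascPochhammer ℝ (p.2 + 1)).eval (a p.1)) with hF_def
  have ha' : ∀ h : Fin q, ∀ n : ℕ, a (h : ℕ) ≠ -(n : ℝ) := fun h => hβ h h.isLt
  set e : Fin q × ℕ ≃ ℕ := mlEquiv q hq with he
  -- pointwise identification
  have hFE : ∀ p : Fin q × ℕ, F p = f (e p) := by
    rintro ⟨h, m⟩
    have hen : e (h, m) = q * m + (q - 1 - (h : ℕ)) := rfl
    set n : ℕ := q * m + (q - 1 - (h : ℕ)) with hn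
    have hh : (h : ℕ) < q := h.isLt
    have hnat : n + 1 + (h : ℕ) = q * (m + 1) := by rw [Nat.mul_succ]; omega
    have hcast : (n : ℝ) + 1 + ((h : ℕ) : ℝ) = (q : ℝ) * ((m : ℝ) + 1) := by
      have := congrArg (Nat.cast : ℕ → ℝ) hnat
      push_cast at this
      linarith
    have harg : ((n : ℝ) + 1) / q + β = ((m : ℝ) + 1) + a (h : ℕ) := by
      simp only [ha_def]
      field_simp
      linarith [hcast]
    have hΓ : Real.Gamma (((m : ℝ) + 1) + a (h : ℕ))
        = (ascPochhammer ℝ (m + 1)).eval (a (h : ℕ)) * Real.Gamma (a (h : ℕ)) := by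
      have h' := Gamma_pochhammer (ha' h) (m + 1)
      push_cast at h'
      exact h'
    have hxpow : (x : ℝ) ^ (n + 1) = x ^ (-((h : ℕ) : ℤ)) * y ^ (m + 1) := by
      rw [hy, ← pow_mul, ← zpow_natCast x (n + 1), ← zpow_natCast x (q * (m + 1)),
        ← zpow_add₀ hx]
      congr 1
      omega
    have hΓne : Real.Gamma (a (h : ℕ)) ≠ 0 := Real.Gamma_ne_zero (ha' h)
    have hPne : (ascPochhammer ℝ (m + 1)).eval (a (h : ℕ)) ≠ 0 := poch_ne_zero (ha' h) _
    rw [hen]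
    simp only [hF_def, hf]
    rw [harg, hΓ, hxpow]
    field_simp
  -- summability
  have hslice : ∀ h : Fin q, Summable fun m => F (h, m) := by
    intro h
    simp only [hF_def]
    exact (summable_Qterm (ha' h) y).mul_left _
  have hF : Summable F := by
    rw [← summable_abs_iff]
    exact (summable_prod_of_nonneg fun p => abs_nonneg _).2
      ⟨fun h => (hslice h).abs, Summable.of_finite⟩
  -- assembling
  have h1 : ∑' k : ℕ, f k = ∑' p : Fin q × ℕ, F p :=
    ((tsum_congr hFE).trans (e.tsum_eq f)).symm
  have h3 : ∀ h : Fin q, (∑' m : ℕ, F (h, m))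
      = x ^ (-((h : ℕ) : ℤ)) / Real.Gamma (a (h : ℕ)) * Q (a (h : ℕ)) y := by
    intro h
    simp only [hF_def, Q]
    exact tsum_mul_left
  have h2 : ∑' p : Fin q × ℕ, F p
      = ∑ h : Fin q, x ^ (-((h : ℕ) : ℤ)) / Real.Gamma (a (h : ℕ)) * Q (a (h : ℕ)) y := by
    rw [Summable.tsum_prod' hF hslice, tsum_fintype]
    exact Finset.sum_congr rfl fun h _ => h3 h
  rw [h1, h2]
  congr 1
  exact Fin.sum_univ_eq_sum_range
    (fun h : ℕ => x ^ (-(h : ℤ)) / Real.Gamma (a h) * Q (a h) y) q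
end

section
/- Let q ≥ 1 be an integer and let x ≠ 0 be real. Then −∑_{k=1}^∞ ψ(k/q) x^k / (k · Γ(k/q)) = (1/q) ∑_{h=0}^{q−1} (x^{−h} / Γ(1 − h/q)) · [ S(1 − h/q, x^q) − Q(1 − h/q, x^q) ], where Q(a, y) = ∑_{k=1}^∞ y^k ψ(k + a)/(a)_k and S(a, y) = ∑_{k=0}^∞ y^{k+1} / ((k + a) · (a)_{k+1}). (This is Theorem 2.6, the reduction formula for the derivative of the integral Mittag-Leffler function with respect to β at α = 1/q, β = 0.) -/
open scoped BigOperators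

/-- `S(a, y) = ∑_{k=0}^∞ y^{k+1} / ((k + a) (a)_{k+1})`. -/
noncomputable def S (a y : ℝ) : ℝ :=
  ∑' k : ℕ, y ^ (k + 1) / (((k : ℝ) + a) * (ascPochhammer ℝ (k + 1)).eval a)

/-!
Split the series according to the residue `r` of `k` modulo `q`. For `k = q n + r` and
`h = q - 1 - r` one has `(k + 1) / q = n + a` with `a = 1 - h / q`, and the recursions
`ψ(n + a) = ψ(n + 1 + a) - 1 / (n + a)` and `(n + a) Γ(n + a) = Γ(a) (a)_{n+1}` turn the `k`-th
term into `x^{-h} / (q Γ(a))` times the `n`-th term of `S(a, x^q) - Q(a, x^q)`. Both series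
converge absolutely since `(a)_{k+1} ≥ a k!` while `ψ` grows at most linearly along `a + ℕ`.
-/

open Finset

theorem ne_neg_natCast_of_pos {a : ℝ} (ha : 0 < a) (m : ℕ) : a ≠ -m :=
  fun h => by linarith [h ▸ ha, m.cast_nonneg (α := ℝ)]

theorem Real.deriv_Gamma_add_one {s : ℝ} (hs : ∀ m : ℕ, s ≠ -m) :
    deriv Real.Gamma (s + 1) = Real.Gamma s + s * deriv Real.Gamma s := by
  have hs0 : s ≠ 0 := by simpa using hs 0
  have h := (hasDerivAt_id s).mul (Real.differentiableAt_Gamma hs).hasDerivAt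
  rw [one_mul] at h
  rw [← deriv_comp_add_const]
  exact (h.congr_of_eventuallyEq
    ((eventually_ne_nhds hs0).mono fun t ht => Real.Gamma_add_one ht)).deriv

theorem Real.Gamma_add_nat {s : ℝ} (hs : ∀ m : ℕ, s ≠ -m) (n : ℕ) :
    Real.Gamma (s + n) = Real.Gamma s * (ascPochhammer ℝ n).eval s := by
  induction n with
  | zero => simp
  | succ n ih =>
    have hsn : s + n ≠ 0 := fun h => hs n (by linarith)
    rw [Nat.cast_succ, ← add_assoc, Real.Gamma_add_one hsn, ih, ascPochhammer_succ_eval]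
    ring

theorem digamma_add_one {s : ℝ} (hs : ∀ m : ℕ, s ≠ -m) :
    digamma (s + 1) = digamma s + s⁻¹ := by
  have hs0 : s ≠ 0 := by simpa using hs 0
  have hΓ : Real.Gamma s ≠ 0 := Real.Gamma_ne_zero hs
  rw [digamma, digamma, Real.deriv_Gamma_add_one hs, Real.Gamma_add_one hs0]
  field_simp
  ring

theorem digamma_add_nat {s : ℝ} (hs : ∀ m : ℕ, s ≠ -m) (n : ℕ) :
    digamma (s + n) = digamma s + ∑ j ∈ range n, (s + j)⁻¹ := by
  induction n with
  | zero => simp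
  | succ n ih =>
    have hsn : ∀ m : ℕ, s + n ≠ -m := fun m h => hs (m + n) (by push_cast; linarith)
    rw [Nat.cast_succ, ← add_assoc, digamma_add_one hsn, ih, sum_range_succ, add_assoc]

theorem abs_digamma_add_nat_le {a : ℝ} (ha : 0 < a) (n : ℕ) :
    |digamma (a + n)| ≤ |digamma a| + n / a := by
  rw [digamma_add_nat (ne_neg_natCast_of_pos ha)]
  refine (abs_add_le _ _).trans (add_le_add_right ?_ _)
  calc |∑ j ∈ range n, (a + j)⁻¹| ≤ ∑ j ∈ range n, |(a + j)⁻¹| := abs_sum_le_sum_abs _ _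
    _ ≤ ∑ _j ∈ range n, a⁻¹ := sum_le_sum fun j _ => by
        rw [abs_of_pos (by positivity)]
        exact inv_anti₀ ha (le_add_of_nonneg_right j.cast_nonneg)
    _ = n / a := by simp [div_eq_mul_inv]

theorem mul_factorial_le_ascPochhammer_eval_succ {a : ℝ} (ha : 0 < a) (n : ℕ) :
    a * n.factorial ≤ (ascPochhammer ℝ (n + 1)).eval a := by
  induction n with
  | zero => simp
  | succ n ih =>
    calc a * ((n + 1).factorial : ℝ) = a * n.factorial * ((n + 1 : ℕ) : ℝ) := by
          rw [Nat.factorial_succ, Nat.cast_mul]; ring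
      _ ≤ (ascPochhammer ℝ (n + 1)).eval a * (a + (n + 1 : ℕ)) := by
          gcongr
          · exact (ascPochhammer_pos _ _ ha).le
          · linarith
      _ = (ascPochhammer ℝ (n + 1 + 1)).eval a := (ascPochhammer_succ_eval _ _).symm

theorem summable_mul_pow_div_ascPochhammer {a : ℝ} (ha : 0 < a) (y : ℝ) {c : ℕ → ℝ} {C : ℝ}
    (hc : ∀ k, |c k| ≤ C * (k + 1)) :
    Summable fun k : ℕ => c k * y ^ (k + 1) / (ascPochhammer ℝ (k + 1)).eval a := by
  have hC : 0 ≤ C := by simpa using (abs_nonneg _).trans (hc 0)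
  have hexp : Summable fun k : ℕ => (2 * |y|) ^ (k + 1) / k.factorial := by
    simpa [pow_succ, mul_div_assoc, mul_comm] using
      (Real.summable_pow_div_factorial (2 * |y|)).mul_left (2 * |y|)
  refine Summable.of_norm_bounded (hexp.mul_left (C / a)) fun k => ?_
  have hk : ((k : ℝ) + 1) ≤ 2 ^ (k + 1) := by exact_mod_cast (k + 1).lt_two_pow_self.le
  rw [Real.norm_eq_abs, abs_div, abs_mul, abs_pow, abs_of_pos (ascPochhammer_pos _ _ ha)]
  calc |c k| * |y| ^ (k + 1) / (ascPochhammer ℝ (k + 1)).eval a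
      ≤ C * 2 ^ (k + 1) * |y| ^ (k + 1) / (a * k.factorial) := by
        gcongr
        · exact (hc k).trans (by gcongr)
        · exact mul_factorial_le_ascPochhammer_eval_succ ha k
    _ = C / a * ((2 * |y|) ^ (k + 1) / k.factorial) := by ring

theorem hasSum_S {a : ℝ} (ha : 0 < a) (y : ℝ) :
    HasSum (fun k : ℕ => y ^ (k + 1) / (((k : ℝ) + a) * (ascPochhammer ℝ (k + 1)).eval a))
      (S a y) := by
  refine Summable.hasSum ?_
  have hc : ∀ k : ℕ, |((k : ℝ) + a)⁻¹| ≤ a⁻¹ * (k + 1) := fun k => by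
    rw [abs_of_pos (by positivity)]
    calc ((k : ℝ) + a)⁻¹ ≤ a⁻¹ := inv_anti₀ ha (by linarith [k.cast_nonneg (α := ℝ)])
      _ ≤ a⁻¹ * (k + 1) :=
        le_mul_of_one_le_right (by positivity) (by linarith [k.cast_nonneg (α := ℝ)])
  refine (summable_mul_pow_div_ascPochhammer ha y hc).congr fun k => ?_
  simp only [div_eq_mul_inv, mul_inv]
  ring

theorem hasSum_Q {a : ℝ} (ha : 0 < a) (y : ℝ) :
    HasSum (fun k : ℕ =>
      y ^ (k + 1) * digamma (((k : ℝ) + 1) + a) / (ascPochhammer ℝ (k + 1)).eval a) (Q a y) := by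
  refine Summable.hasSum ?_
  have hc : ∀ k : ℕ, |digamma (((k : ℝ) + 1) + a)| ≤ (|digamma a| + a⁻¹) * (k + 1) := fun k => by
    have h := abs_digamma_add_nat_le ha (k + 1)
    rw [add_comm a, Nat.cast_succ] at h
    refine h.trans ?_
    have : |digamma a| ≤ |digamma a| * (k + 1) :=
      le_mul_of_one_le_right (abs_nonneg _) (by linarith [k.cast_nonneg (α := ℝ)])
    rw [add_mul, div_eq_inv_mul, mul_comm a⁻¹]
    linarith
  refine (summable_mul_pow_div_ascPochhammer ha y hc).congr fun k => ?_
  ring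

theorem neg_digamma_div_mul_Gamma_add_nat {a : ℝ} (ha : ∀ m : ℕ, a ≠ -m) (n : ℕ) :
    -(digamma (n + a) / ((n + a) * Real.Gamma (n + a))) =
      (1 / ((n + a) * (ascPochhammer ℝ (n + 1)).eval a) -
        digamma ((n + 1) + a) / (ascPochhammer ℝ (n + 1)).eval a) / Real.Gamma a := by
  have hna : ∀ m : ℕ, (n : ℝ) + a ≠ -m := fun m h => ha (m + n) (by push_cast; linarith)
  have hΓ : Real.Gamma (n + a) = Real.Gamma a * (ascPochhammer ℝ n).eval a := by
    rw [add_comm, Real.Gamma_add_nat ha]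
  have hΓne : Real.Gamma a * (ascPochhammer ℝ n).eval a ≠ 0 := hΓ ▸ Real.Gamma_ne_zero hna
  have hna0 : (n : ℝ) + a ≠ 0 := by simpa using hna 0
  rw [show (n : ℝ) + 1 + a = n + a + 1 by ring, digamma_add_one hna, hΓ,
    ascPochhammer_succ_eval, add_comm a]
  field_simp [mul_ne_zero_iff.1 hΓne]
  ring

theorem hasSum_neg_digamma_div_mul_Gamma {a : ℝ} (ha : 0 < a) (y : ℝ) :
    HasSum (fun n : ℕ => -(digamma (n + a) * y ^ (n + 1) / ((n + a) * Real.Gamma (n + a))))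
      ((S a y - Q a y) / Real.Gamma a) := by
  refine (((hasSum_S ha y).sub (hasSum_Q ha y)).div_const (Real.Gamma a)).congr_fun fun n => ?_
  calc -(digamma (n + a) * y ^ (n + 1) / ((n + a) * Real.Gamma (n + a)))
      = y ^ (n + 1) * -(digamma (n + a) / ((n + a) * Real.Gamma (n + a))) := by ring
    _ = _ := by rw [neg_digamma_div_mul_Gamma_add_nat (ne_neg_natCast_of_pos ha)]; ring

theorem hasSum_of_hasSum_mul_add {M : Type*} [AddCommMonoid M] [TopologicalSpace M]
    [ContinuousAdd M] {f : ℕ → M} {q : ℕ} (hq : 0 < q) {s : ℕ → M}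
    (hf : ∀ r < q, HasSum (fun n => f (q * n + r)) (s r)) :
    HasSum f (∑ r ∈ range q, s r) := by
  have hclass : ∀ r ∈ range q, HasSum ({k | k % q = r}.indicator f) (s r) := by
    intro r hr
    rw [mem_range] at hr
    have hinj : Function.Injective fun n => q * n + r := fun m n h =>
      Nat.eq_of_mul_eq_mul_left hq (by simpa using h)
    rw [← hinj.hasSum_iff]
    · simpa [Function.comp_def, Nat.mul_add_mod, Nat.mod_eq_of_lt hr] using hf r hr
    · intro k hk
      refine Set.indicator_of_notMem (fun hkr => hk ⟨k / q, ?_⟩) f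
      simp only [Set.mem_ofPred_eq] at hkr
      simp only [← hkr, Nat.div_add_mod]
  convert hasSum_sum hclass with k
  simp [Set.indicator_apply, Nat.mod_lt k hq]

theorem hasSum_neg_digamma_series_mul_add {q r : ℕ} (hr : r < q) {x : ℝ} (hx : x ≠ 0) :
    HasSum (fun n : ℕ => -(digamma ((((q * n + r : ℕ) : ℝ) + 1) / q) * x ^ (q * n + r + 1) /
        ((((q * n + r : ℕ) : ℝ) + 1) * Real.Gamma ((((q * n + r : ℕ) : ℝ) + 1) / q))))
      (1 / q * (x ^ (-((q - 1 - r : ℕ) : ℤ)) / Real.Gamma (1 - ((q - 1 - r : ℕ) : ℝ) / q) *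
        (S (1 - ((q - 1 - r : ℕ) : ℝ) / q) (x ^ q) -
          Q (1 - ((q - 1 - r : ℕ) : ℝ) / q) (x ^ q)))) := by
  set h := q - 1 - r
  set a : ℝ := 1 - (h : ℝ) / q with ha_def
  have hhr : h + r + 1 = q := by omega
  have hq : (0 : ℝ) < q := by exact_mod_cast (r.zero_le.trans_lt hr)
  have ha : a = (r + 1) / q := by
    rw [eq_div_iff hq.ne', ha_def, sub_mul, div_mul_cancel₀ _ hq.ne']
    linarith [(by exact_mod_cast hhr : (h : ℝ) + r + 1 = q)]
  have hk (n : ℕ) : ((q * n + r : ℕ) : ℝ) + 1 = q * (n + a) := by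
    rw [ha]; push_cast; field_simp; ring
  have hpow (n : ℕ) : x ^ (q * n + r + 1) = x ^ (-(h : ℤ)) * (x ^ q) ^ (n + 1) := by
    rw [← pow_mul, ← zpow_natCast x (q * (n + 1)), ← zpow_add₀ hx, ← zpow_natCast]
    congr 1
    push_cast
    linear_combination (by exact_mod_cast hhr : (h : ℤ) + r + 1 = q)
  rw [show ∀ v : ℝ, 1 / q * (x ^ (-(h : ℤ)) / Real.Gamma a * v) =
      x ^ (-(h : ℤ)) / q * (v / Real.Gamma a) from fun v => by ring]
  refine ((hasSum_neg_digamma_div_mul_Gamma (by rw [ha]; positivity) (x ^ q)).mul_left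
    (x ^ (-(h : ℤ)) / q)).congr_fun fun n => ?_
  rw [hk, mul_div_cancel_left₀ _ hq.ne', hpow]
  field_simp

/-- **Theorem 2.6**: for an integer `q ≥ 1` and real `x ≠ 0`,
`−∑_{k=1}^∞ ψ(k/q) x^k / (k Γ(k/q))
  = (1/q) ∑_{h=0}^{q−1} (x^{−h}/Γ(1 − h/q)) [S(1 − h/q, x^q) − Q(1 − h/q, x^q)]`. -/
theorem integral_mittagLeffler_beta_deriv_inv_nat_zero (q : ℕ) (hq : 1 ≤ q) (x : ℝ)
    (hx : x ≠ 0) :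
    -∑' k : ℕ,
        digamma (((k : ℝ) + 1) / q) * x ^ (k + 1) /
          (((k : ℝ) + 1) * Real.Gamma (((k : ℝ) + 1) / q)) =
      (1 / (q : ℝ)) *
        ∑ h ∈ Finset.range q,
          x ^ (-(h : ℤ)) / Real.Gamma (1 - (h : ℝ) / q) *
            (S (1 - (h : ℝ) / q) (x ^ q) - Q (1 - (h : ℝ) / q) (x ^ q)) := by
  rw [mul_sum, ← sum_range_reflect, ← tsum_neg]
  refine (hasSum_of_hasSum_mul_add hq fun r hr => ?_).tsum_eq
  exact hasSum_neg_digamma_series_mul_add hr hx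
end
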